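/- Saturation domination inequality. Let sat : ℝ → ℝ be defined by sat(s) = s if |s| ≤ 1 and sat(s) = sign(s) otherwise. Then for all real numbers w and Δ, all ρ ≥ 0 and all μ > 0 with |Δ| ≤ ρ, one has w·(−ρ·sat(ρ·w/μ) + Δ) ≤ μ/4. -/
import Mathlib


/-- The unit saturation function: `sat s = s` for `|s| ≤ 1` and `sat s = sign s` otherwise. -/
noncomputable def satFn (s : ℝ) : ℝ := if |s| ≤ 1 then s else Real.sign s

/-- **Saturation domination inequality.** For all `w Δ : ℝ`, `ρ ≥ 0`, `μ > 0` with
`|Δ| ≤ ρ`, one has `w·(−ρ·sat(ρ·μ⁻¹·w) + Δ) ≤ μ/4`. -/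
theorem saturation_domination (w Δ ρ μ : ℝ) (hρ : 0 ≤ ρ) (hμ : 0 < μ)
    (hΔ : |Δ| ≤ ρ) :
    w * (-ρ * satFn (ρ * μ⁻¹ * w) + Δ) ≤ μ / 4 := by
  have h1 : w * Δ ≤ |w| * ρ := by
    calc w * Δ ≤ |w * Δ| := le_abs_self _
    _ = |w| * |Δ| := abs_mul _ _
    _ ≤ |w| * ρ := mul_le_mul_of_nonneg_left hΔ (abs_nonneg w)
  unfold satFn
  split_ifs with h
  · have hkey : w * (-ρ * (ρ * μ⁻¹ * w) + Δ) = -(ρ * w) ^ 2 * μ⁻¹ + w * Δ := by ring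
    have hx : (ρ * w) ^ 2 = (ρ * |w|) ^ 2 := by
      rw [mul_pow, mul_pow, sq_abs]
    have hid : -(ρ * |w|) ^ 2 * μ⁻¹ + ρ * |w| - μ / 4 = -(ρ * |w| - μ / 2) ^ 2 * μ⁻¹ := by
      field_simp
      ring
    have hle : -(ρ * |w| - μ / 2) ^ 2 * μ⁻¹ ≤ 0 := by
      apply mul_nonpos_of_nonpos_of_nonneg
      · simpa using sq_nonneg (ρ * |w| - μ / 2)
      · positivity
    rw [hkey, hx]
    nlinarith [h1]
  · push_neg at h
    have hw0 : w ≠ 0 := by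
      rintro rfl
      simp at h
      linarith
    have hρ0 : 0 < ρ := by
      rcases hρ.lt_or_eq with h' | h'
      · exact h'
      · exfalso; rw [← h'] at h; simp at h; linarith
    have hΔ1 : Δ ≤ ρ := (le_abs_self Δ).trans hΔ
    have hΔ2 : -ρ ≤ Δ := (neg_le ..).mp ((neg_le_abs Δ).trans hΔ)
    rcases hw0.lt_or_gt with hw | hw
    · have hs : ρ * μ⁻¹ * w < 0 := by
        have := mul_pos hρ0 (inv_pos.mpr hμ)
        exact mul_neg_of_pos_of_neg this hw
      rw [Real.sign_of_neg hs]
      have : w * (-ρ * (-1) + Δ) ≤ 0 := by nlinarith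
      linarith
    · have hs : 0 < ρ * μ⁻¹ * w := mul_pos (mul_pos hρ0 (inv_pos.mpr hμ)) hw
      rw [Real.sign_of_pos hs]
      have : w * (-ρ * 1 + Δ) ≤ 0 := by nlinarith
      linarith
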